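/- In U_q^+(so_5), the element z := (1−q²)E1E3 + q²(q+q⁻¹)E4 is central, where E3 = E1E2 − q⁻²E2E1 and E4 = (q+q⁻¹)⁻¹(E1²E2 − q⁻¹(q+q⁻¹)E1E2E1 + q⁻²E2E1²). -/

import Mathlib

noncomputable section

open FreeAlgebra

/-- The quantum Serre relations of type B₂ defining `U_q⁺(so₅)`. -/
inductive so5Rel (q : ℂ) : FreeAlgebra ℂ (Fin 2) → FreeAlgebra ℂ (Fin 2) → Prop
  | serre1 : so5Rel q
      (ι ℂ 0 * ι ℂ 0 * ι ℂ 0 * ι ℂ 1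
        - (q ^ 2 + 1 + (q ^ 2)⁻¹) • (ι ℂ 0 * ι ℂ 0 * ι ℂ 1 * ι ℂ 0)
        + (q ^ 2 + 1 + (q ^ 2)⁻¹) • (ι ℂ 0 * ι ℂ 1 * ι ℂ 0 * ι ℂ 0)
        - ι ℂ 1 * ι ℂ 0 * ι ℂ 0 * ι ℂ 0) 0
  | serre2 : so5Rel q
      (ι ℂ 1 * ι ℂ 1 * ι ℂ 0 - (q ^ 2 + (q ^ 2)⁻¹) • (ι ℂ 1 * ι ℂ 0 * ι ℂ 1)
        + ι ℂ 0 * ι ℂ 1 * ι ℂ 1) 0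

/-- `U_q⁺(so₅)`. -/
abbrev UqB2 (q : ℂ) := RingQuot (so5Rel q)

def F₁ (q : ℂ) : UqB2 q := RingQuot.mkAlgHom ℂ (so5Rel q) (ι ℂ 0)
def F₂ (q : ℂ) : UqB2 q := RingQuot.mkAlgHom ℂ (so5Rel q) (ι ℂ 1)

/-- The root vector `E₃ = E₁E₂ - q⁻²E₂E₁`. -/
def F₃ (q : ℂ) : UqB2 q := F₁ q * F₂ q - (q ^ 2)⁻¹ • (F₂ q * F₁ q)

/-- The root vector `E₄ = (q+q⁻¹)⁻¹ (E₁²E₂ - q⁻¹(q+q⁻¹)E₁E₂E₁ + q⁻²E₂E₁²)`. -/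
def F₄ (q : ℂ) : UqB2 q :=
  (q + q⁻¹)⁻¹ • (F₁ q * F₁ q * F₂ q - (q⁻¹ * (q + q⁻¹)) • (F₁ q * F₂ q * F₁ q)
    + (q ^ 2)⁻¹ • (F₂ q * F₁ q * F₁ q))

/-- The central element `z = (1-q²)E₁E₃ + q²(q+q⁻¹)E₄`. -/
def zB2 (q : ℂ) : UqB2 q := (1 - q ^ 2) • (F₁ q * F₃ q) + (q ^ 2 * (q + q⁻¹)) • F₄ q

/-- The central element `z' = -(q²-q⁻²)(q+q⁻¹)E₄E₂ + q²(q²-1)E₃²`. -/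
def z'B2 (q : ℂ) : UqB2 q :=
  (-((q ^ 2 - (q ^ 2)⁻¹) * (q + q⁻¹))) • (F₄ q * F₂ q) + (q ^ 2 * (q ^ 2 - 1)) • (F₃ q ^ 2)

/-! Since `q⁴ ≠ 1`, `q + q⁻¹` is invertible and `z` simplifies to `E₁²E₂ - (q² + q⁻²)E₁E₂E₁ + E₂E₁²`.
For any scalar `c`, the commutator of `w = a²b - c·aba + ba²` with `a` is minus the cubic Serre
expression in `a, b` with middle coefficient `c + 1`, and its commutator with `b` is the commutator
of `a` with the quadratic Serre expression `b²a - c·bab + ab²`. For `c = q² + q⁻²` both Serre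
expressions vanish, so `z` commutes with the generators `E₁, E₂`, hence with everything. -/

theorem RingQuot.adjoin_range_mkAlgHom_ι {R X : Type*} [CommSemiring R]
    (r : FreeAlgebra R X → FreeAlgebra R X → Prop) :
    Algebra.adjoin R (Set.range fun x ↦ mkAlgHom R r (ι R x)) = ⊤ := by
  rw [Set.range_comp' (mkAlgHom R r) (ι R), Algebra.adjoin_image, adjoin_range_ι,
    Algebra.map_top, AlgHom.range_eq_top]
  exact mkAlgHom_surjective R r

theorem RingQuot.commute_of_forall_commute_mkAlgHom_ι {R X : Type*} [CommSemiring R]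
    {r : FreeAlgebra R X → FreeAlgebra R X → Prop} {z : RingQuot r}
    (h : ∀ x, Commute z (mkAlgHom R r (ι R x))) (y : RingQuot r) : Commute z y :=
  Algebra.commute_of_mem_adjoin_of_forall_mem_commute
    (adjoin_range_mkAlgHom_ι r ▸ Algebra.mem_top) (Set.forall_mem_range.2 h)

section SerreQuad

variable {R A : Type*} [CommRing R] [Ring A] [Algebra R A]

def serreQuad (c : R) (a b : A) : A := a * a * b - c • (a * b * a) + b * a * a

variable (c : R) {a b : A}

theorem commute_serreQuad_left
    (h : a * a * a * b - (c + 1) • (a * a * b * a) + (c + 1) • (a * b * a * a)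
      - b * a * a * a = 0) :
    Commute (serreQuad c a b) a := by
  rw [Commute, SemiconjBy, ← sub_eq_zero, ← neg_eq_zero, ← h, serreQuad]
  simp only [add_smul, one_smul, smul_mul_assoc, mul_smul_comm, add_mul, sub_mul, mul_add,
    mul_sub, mul_assoc]
  abel

theorem commute_serreQuad_right (h : serreQuad c b a = 0) : Commute (serreQuad c a b) b := by
  have hcomm : serreQuad c a b * b - b * serreQuad c a b
      = a * serreQuad c b a - serreQuad c b a * a := by
    simp only [serreQuad, smul_mul_assoc, mul_smul_comm, add_mul, sub_mul, mul_add, mul_sub,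
      mul_assoc]
    abel
  rw [Commute, SemiconjBy, ← sub_eq_zero, hcomm, h, mul_zero, zero_mul, sub_zero]

end SerreQuad

theorem serre_F₁_F₂ (q : ℂ) :
    F₁ q * F₁ q * F₁ q * F₂ q - (q ^ 2 + (q ^ 2)⁻¹ + 1) • (F₁ q * F₁ q * F₂ q * F₁ q)
      + (q ^ 2 + (q ^ 2)⁻¹ + 1) • (F₁ q * F₂ q * F₁ q * F₁ q) - F₂ q * F₁ q * F₁ q * F₁ q = 0 := by
  simpa only [map_sub, map_add, map_smul, map_mul, map_zero, add_right_comm _ (1 : ℂ), F₁, F₂]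
    using RingQuot.mkAlgHom_rel ℂ (so5Rel.serre1 (q := q))

theorem serreQuad_F₂_F₁ (q : ℂ) : serreQuad (q ^ 2 + (q ^ 2)⁻¹) (F₂ q) (F₁ q) = 0 := by
  simpa only [map_sub, map_add, map_smul, map_mul, map_zero, serreQuad, F₁, F₂]
    using RingQuot.mkAlgHom_rel ℂ (so5Rel.serre2 (q := q))

theorem zB2_eq_serreQuad {q : ℂ} (hq : q ≠ 0) (hq2 : q ^ 2 + 1 ≠ 0) :
    zB2 q = serreQuad (q ^ 2 + (q ^ 2)⁻¹) (F₁ q) (F₂ q) := by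
  have hqq : q + q⁻¹ ≠ 0 := by
    rw [← mul_ne_zero_iff_right hq]; field_simp; exact hq2
  rw [zB2, F₃, F₄, serreQuad]
  simp only [smul_add, smul_sub, smul_smul, mul_sub, mul_smul_comm, mul_assoc]
  match_scalars <;> field_simp <;> ring

theorem commute_zB2_F₁ {q : ℂ} (hq : q ≠ 0) (hq2 : q ^ 2 + 1 ≠ 0) : Commute (zB2 q) (F₁ q) :=
  zB2_eq_serreQuad hq hq2 ▸ commute_serreQuad_left _ (serre_F₁_F₂ q)

theorem commute_zB2_F₂ {q : ℂ} (hq : q ≠ 0) (hq2 : q ^ 2 + 1 ≠ 0) : Commute (zB2 q) (F₂ q) :=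
  zB2_eq_serreQuad hq hq2 ▸ commute_serreQuad_right _ (serreQuad_F₂_F₁ q)

theorem stmt9 (q : ℂ) (hq : q ≠ 0) (hq' : ∀ n : ℕ, 0 < n → q ^ n ≠ 1) :
    ∀ x : UqB2 q, zB2 q * x = x * zB2 q := by
  have hq2 : q ^ 2 + 1 ≠ 0 := fun h ↦ hq' 4 four_pos (by linear_combination (q ^ 2 - 1) * h)
  intro x
  refine (RingQuot.commute_of_forall_commute_mkAlgHom_ι (fun i ↦ ?_) x).eq
  fin_cases i
  exacts [commute_zB2_F₁ hq hq2, commute_zB2_F₂ hq hq2]
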